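/- Let G be an orderenergetic graph of order p. Then the 2-splitting graph spl₂(G) and the 3-shadow graph D₃(G) are equiorderenergetic: both have 3p vertices and both have energy 3p (so both are orderenergetic). -/

import Mathlib

open Matrix SimpleGraph Finset

variable {V W : Type*}

/-- The adjacency matrix of a simple graph over ℝ is Hermitian. -/
lemma adjMatrix_isHermitian [Fintype V] [DecidableEq V] (G : SimpleGraph V)
    [DecidableRel G.Adj] : (G.adjMatrix ℝ).IsHermitian := by
  rw [Matrix.IsHermitian, Matrix.conjTranspose_eq_transpose_of_trivial]
  exact G.isSymm_adjMatrix

/-- The energy of a finite simple graph: the sum of the absolute values of the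
eigenvalues of its real adjacency matrix. -/
noncomputable def graphEnergy [Fintype V] [DecidableEq V] (G : SimpleGraph V) : ℝ := by
  classical
  exact ∑ i, |(adjMatrix_isHermitian G).eigenvalues i|

/-- The spectrum of a finite simple graph: the multiset of eigenvalues (with
multiplicity) of its real adjacency matrix. -/
noncomputable def graphSpectrum [Fintype V] [DecidableEq V] (G : SimpleGraph V) : Multiset ℝ := by
  classical
  exact Finset.univ.val.map (adjMatrix_isHermitian G).eigenvalues

/-- A graph is integral if every eigenvalue of its adjacency matrix is an integer. -/
def IsIntegralGraph [Fintype V] [DecidableEq V] (G : SimpleGraph V) : Prop :=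
  ∀ x ∈ graphSpectrum G, ∃ k : ℤ, x = (k : ℝ)

/-- The m-shadow graph of `G`, on vertex set `Fin m × V`: `(i,u)` and `(j,v)` are
adjacent iff `u` and `v` are adjacent in `G`. -/
def shadowGraph (m : ℕ) (G : SimpleGraph V) : SimpleGraph (Fin m × V) where
  Adj x y := G.Adj x.2 y.2
  symm := ⟨fun _ _ h => h.symm⟩
  loopless := ⟨fun _ h => G.loopless.irrefl _ h⟩

/-- The duplicate graph of `G`, on vertex set `V ⊕ V`: `inl a` is adjacent to
`inr b` iff `a` and `b` are adjacent in `G`; no other adjacencies. -/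
def duplicateGraph (G : SimpleGraph V) : SimpleGraph (V ⊕ V) where
  Adj x y :=
    match x, y with
    | Sum.inl a, Sum.inr b => G.Adj a b
    | Sum.inr a, Sum.inl b => G.Adj a b
    | _, _ => False
  symm := ⟨by rintro (a | a) (b | b) h <;> first | exact h.symm | exact h.elim⟩
  loopless := ⟨by rintro (a | a) h <;> exact h⟩

/-- The Kronecker (tensor) product of two simple graphs. -/
def tensorGraph (G : SimpleGraph V) (H : SimpleGraph W) : SimpleGraph (V × W) where
  Adj x y := G.Adj x.1 y.1 ∧ H.Adj x.2 y.2
  symm := ⟨fun _ _ h => ⟨h.1.symm, h.2.symm⟩⟩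
  loopless := ⟨fun _ h => G.loopless.irrefl _ h.1⟩

/-- The m-splitting graph of `G`, on vertex set `V ⊕ (Fin m × V)`: original
vertices keep their adjacencies, an original vertex `u` is adjacent to a copy
`(i,v)` iff `u` is adjacent to `v` in `G`, and copies are pairwise non-adjacent. -/
def splittingGraph (m : ℕ) (G : SimpleGraph V) : SimpleGraph (V ⊕ (Fin m × V)) where
  Adj x y :=
    match x, y with
    | Sum.inl u, Sum.inl v => G.Adj u v
    | Sum.inl u, Sum.inr iv => G.Adj u iv.2
    | Sum.inr iu, Sum.inl v => G.Adj iu.2 v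
    | Sum.inr _, Sum.inr _ => False
  symm := ⟨by rintro (u | iu) (v | iv) h <;> first | exact h.symm | exact h.elim⟩
  loopless := ⟨by rintro (u | iu) h <;> first | exact G.loopless.irrefl _ h | exact h⟩

/-- The join of two simple graphs: their disjoint union together with all edges
between the two parts. -/
def joinGraph (G : SimpleGraph V) (H : SimpleGraph W) : SimpleGraph (V ⊕ W) where
  Adj x y :=
    match x, y with
    | Sum.inl a, Sum.inl b => G.Adj a b
    | Sum.inr a, Sum.inr b => H.Adj a b
    | _, _ => True
  symm := ⟨by rintro (a | a) (b | b) h <;> first | exact h.symm | trivial⟩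
  loopless := ⟨by rintro (a | a) h <;> first | exact G.loopless.irrefl _ h | exact H.loopless.irrefl _ h⟩

/-- The superpath graph on a sequence of part sizes: independent sets `W i` of
size `a i`, where vertices in parts `i` and `j` are adjacent iff `|i - j| = 1`. -/
def superpathGraph {t : ℕ} (a : Fin t → ℕ) : SimpleGraph (Σ i : Fin t, Fin (a i)) where
  Adj x y := (x.1 : ℕ) + 1 = (y.1 : ℕ) ∨ (y.1 : ℕ) + 1 = (x.1 : ℕ)
  symm := ⟨fun _ _ h => h.symm⟩
  loopless := ⟨fun x h => by omega⟩


/-! The adjacency matrices of both graphs are, up to reindexing, Kronecker products `S ⊗ A(G)`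
with `S` a symmetric `3 × 3` matrix: the all-ones matrix for `D₃(G)` and
`!![1, 1, 1; 1, 0, 0; 1, 0, 0]` for `spl₂(G)`. The eigenvalues of a Kronecker product of symmetric
matrices are the pairwise products of eigenvalues, so energy is multiplicative, and both choices
of `S` have energy `3` (spectra `{3, 0, 0}` and `{2, -1, 0}`). -/

open Polynomial Kronecker

namespace Matrix

variable {m n : Type*} [Fintype m] [Fintype n]

/-- Defined through the roots of the characteristic polynomial, so that it needs no symmetry proof
and is visibly invariant under reindexing; see `IsHermitian.energy_eq_sum_abs_eigenvalues`. -/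
noncomputable def energy [DecidableEq n] (A : Matrix n n ℝ) : ℝ :=
  (A.charpoly.roots.map abs).sum

variable [DecidableEq m] [DecidableEq n]

theorem energy_eq_sum_abs_of_charpoly_eq_prod {ι : Type*} [Fintype ι] {A : Matrix n n ℝ}
    (d : ι → ℝ) (h : A.charpoly = ∏ i, (X - C (d i))) : A.energy = ∑ i, |d i| := by
  rw [energy, h, roots_prod _ _ (Finset.prod_ne_zero_iff.mpr fun i _ => X_sub_C_ne_zero (d i))]
  simp

theorem energy_reindex (e : m ≃ n) (A : Matrix m m ℝ) : (reindex e e A).energy = A.energy := by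
  rw [energy, energy, charpoly_reindex]

theorem IsHermitian.energy_eq_sum_abs_eigenvalues {A : Matrix n n ℝ} (hA : A.IsHermitian) :
    A.energy = ∑ i, |hA.eigenvalues i| :=
  energy_eq_sum_abs_of_charpoly_eq_prod _ (by simpa using hA.charpoly_eq)

theorem IsHermitian.charpoly_kronecker {A : Matrix m m ℝ} {B : Matrix n n ℝ}
    (hA : A.IsHermitian) (hB : B.IsHermitian) :
    (A ⊗ₖ B).charpoly = ∏ p : m × n, (X - C (hA.eigenvalues p.1 * hB.eigenvalues p.2)) := by
  set U : Matrix m m ℝ := ↑hA.eigenvectorUnitary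
  set W : Matrix n n ℝ := ↑hB.eigenvectorUnitary
  have hU : star U * U = 1 := Unitary.coe_star_mul_self hA.eigenvectorUnitary
  have hW : star W * W = 1 := Unitary.coe_star_mul_self hB.eigenvectorUnitary
  have hdiag : A ⊗ₖ B = (U ⊗ₖ W) *
      ((diagonal hA.eigenvalues ⊗ₖ diagonal hB.eigenvalues) * (star U ⊗ₖ star W)) := by
    conv_lhs => rw [hA.spectral_theorem, hB.spectral_theorem]
    simp [Unitary.conjStarAlgAut_apply, mul_kronecker_mul, mul_assoc, U, W]
  rw [hdiag, charpoly_mul_comm, mul_assoc, ← mul_kronecker_mul, hU, hW, one_kronecker_one,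
    mul_one, diagonal_kronecker_diagonal, charpoly_diagonal]

theorem IsHermitian.energy_kronecker {A : Matrix m m ℝ} {B : Matrix n n ℝ}
    (hA : A.IsHermitian) (hB : B.IsHermitian) : (A ⊗ₖ B).energy = A.energy * B.energy := by
  rw [energy_eq_sum_abs_of_charpoly_eq_prod _ (hA.charpoly_kronecker hB),
    hA.energy_eq_sum_abs_eigenvalues, hB.energy_eq_sum_abs_eigenvalues, Finset.sum_mul_sum,
    ← Finset.univ_product_univ, Finset.sum_product]
  simp [abs_mul]

end Matrix

theorem Matrix.energy_allOnes (m : ℕ) :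
    (of fun _ _ => 1 : Matrix (Fin m) (Fin m) ℝ).energy = m := by
  have hJ : (of fun _ _ => 1 : Matrix (Fin m) (Fin m) ℝ) = vecMulVec 1 1 := by
    ext; simp [vecMulVec_apply]
  rw [Matrix.energy, hJ, charpoly_vecMulVec]
  cases m with
  | zero => simp
  | succ k =>
    have hfac : (X ^ (k + 1) - ((1 : Fin (k + 1) → ℝ) ⬝ᵥ 1) • X ^ k : ℝ[X])
        = X ^ k * (X - C ((k + 1 : ℕ) : ℝ)) := by
      simp [smul_eq_C_mul]
      ring
    rw [Fintype.card_fin, Nat.add_sub_cancel, hfac,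
      roots_mul (mul_ne_zero (pow_ne_zero _ X_ne_zero) (X_sub_C_ne_zero _)), roots_X_pow,
      roots_X_sub_C]
    simp [Multiset.map_nsmul, Multiset.sum_nsmul,
      abs_of_nonneg (Nat.cast_add_one_pos (α := ℝ) k).le]

/-- The matrix `S` with `A(spl_m G) = S ⊗ A(G)` up to reindexing: `none` stands for the original
vertices, `some i` for the `i`-th copy. -/
def splittingCoeff (m : ℕ) : Matrix (Option (Fin m)) (Option (Fin m)) ℝ :=
  of fun i j => if i = none ∨ j = none then 1 else 0

theorem splittingCoeff_isHermitian (m : ℕ) : (splittingCoeff m).IsHermitian := by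
  ext i j
  simp [splittingCoeff, or_comm]

theorem energy_splittingCoeff_two : (splittingCoeff 2).energy = 3 := by
  have hS : reindex (finSuccEquiv 2).symm (finSuccEquiv 2).symm (splittingCoeff 2) =
      !![1, 1, 1; 1, 0, 0; 1, 0, 0] := by
    ext i j
    fin_cases i <;> fin_cases j <;> rfl
  rw [← Matrix.energy_reindex (finSuccEquiv 2).symm, hS,
    Matrix.energy_eq_sum_abs_of_charpoly_eq_prod ![2, -1, 0]]
  · norm_num [Fin.sum_univ_succ]
  · rw [charpoly, det_fin_three, Fin.prod_univ_three]
    simp [Fin.ext_iff, map_ofNat C]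
    ring

theorem adjMatrix_shadowGraph (m : ℕ) (G : SimpleGraph V) [DecidableRel G.Adj]
    [DecidableRel (shadowGraph m G).Adj] :
    (shadowGraph m G).adjMatrix ℝ =
      (of fun _ _ => 1 : Matrix (Fin m) (Fin m) ℝ) ⊗ₖ G.adjMatrix ℝ := by
  ext ⟨i, u⟩ ⟨j, v⟩
  rw [adjMatrix_apply]
  simp only [shadowGraph, kroneckerMap_apply, of_apply, one_mul, adjMatrix_apply]
  congr

theorem adjMatrix_splittingGraph (m : ℕ) (G : SimpleGraph V) [DecidableRel G.Adj]
    [DecidableRel (splittingGraph m G).Adj] :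
    (splittingGraph m G).adjMatrix ℝ =
      reindex optionProdEquiv optionProdEquiv (splittingCoeff m ⊗ₖ G.adjMatrix ℝ) := by
  ext (u | ⟨i, u⟩) (v | ⟨j, v⟩) <;> rw [adjMatrix_apply] <;>
    simp [splittingGraph, splittingCoeff, optionProdEquiv] <;> congr

section Energy

variable [Fintype V] [DecidableEq V]

theorem graphEnergy_eq_energy_adjMatrix (G : SimpleGraph V) [DecidableRel G.Adj] :
    graphEnergy G = (G.adjMatrix ℝ).energy := by
  rw [(adjMatrix_isHermitian G).energy_eq_sum_abs_eigenvalues, graphEnergy]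
  congr!

theorem graphEnergy_shadowGraph (m : ℕ) (G : SimpleGraph V) :
    graphEnergy (shadowGraph m G) = m * graphEnergy G := by
  classical
  have hJ : (of fun _ _ => 1 : Matrix (Fin m) (Fin m) ℝ).IsHermitian := by
    ext; simp
  rw [graphEnergy_eq_energy_adjMatrix, graphEnergy_eq_energy_adjMatrix, adjMatrix_shadowGraph,
    hJ.energy_kronecker (adjMatrix_isHermitian G), Matrix.energy_allOnes]

theorem graphEnergy_splittingGraph (m : ℕ) (G : SimpleGraph V) :
    graphEnergy (splittingGraph m G) = (splittingCoeff m).energy * graphEnergy G := by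
  classical
  rw [graphEnergy_eq_energy_adjMatrix, graphEnergy_eq_energy_adjMatrix, adjMatrix_splittingGraph,
    Matrix.energy_reindex,
    (splittingCoeff_isHermitian m).energy_kronecker (adjMatrix_isHermitian G)]

end Energy

/-- If `G` is an orderenergetic graph of order `p`, then the 2-splitting graph
`spl₂(G)` and the 3-shadow graph `D₃(G)` are equiorderenergetic: both have
`3 * p` vertices and both have energy `3 * p`. -/
theorem splitting_shadow_equiorderenergetic [Fintype V] [DecidableEq V]
    (G : SimpleGraph V) (p : ℕ) (hp : Fintype.card V = p)
    (hord : graphEnergy G = p) :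
    Fintype.card (V ⊕ (Fin 2 × V)) = 3 * p ∧
      Fintype.card (Fin 3 × V) = 3 * p ∧
      graphEnergy (splittingGraph 2 G) = (3 * p : ℕ) ∧
      graphEnergy (shadowGraph 3 G) = (3 * p : ℕ) := by
  refine ⟨?_, ?_, ?_, ?_⟩
  · simp only [Fintype.card_sum, Fintype.card_prod, Fintype.card_fin, hp]
    ring
  · simp only [Fintype.card_prod, Fintype.card_fin, hp]
  · rw [graphEnergy_splittingGraph, energy_splittingCoeff_two, hord]
    push_cast
    ring
  · rw [graphEnergy_shadowGraph, hord]
    push_cast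
    ring
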